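/- Let A be a complex n×n matrix, b ∈ ℂⁿ, and x* ∈ ℂⁿ with A x* = b. Let π : {1,…,n} → {1,…,m} be a map assigning each index to a block, and let M be an invertible complex n×n matrix that is block diagonal with respect to π, i.e., M_{i,j} = 0 whenever π(i) ≠ π(j). Assume ρ(|I − M⁻¹A|) < 1. Let Ω_k ⊆ {1,…,m} for each k ∈ ℕ be such that every s ∈ {1,…,m} belongs to Ω_k for infinitely many k, and for each s ∈ {1,…,m} let δ_s : {1,…,m} × ℕ → ℕ satisfy δ_s(q,k) ≤ k for all q, k and lim_{k→∞} δ_s(q,k) = ∞ for all q. Let x⁰ ∈ ℂⁿ be arbitrary and define the sequence (xᵏ)_{k∈ℕ} in ℂⁿ by: for every k and every index i with s := π(i), x^{k+1}_i := x^{δ_s(s,k)}_i + Σ_j (M⁻¹)_{i,j} (b_j − Σ_l A_{j,l} x^{δ_s(π(l),k)}_l) if s ∈ Ω_k, while x^{k+1}_i := xᵏ_i if s ∉ Ω_k. Then xᵏ converges to x* as k → ∞. -/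

import Mathlib

/-!
`B = |I - M⁻¹A|` is nonnegative with spectral radius below one, so its Neumann series converges
and `w = ∑ₖ Bᵏ 1` is a positive vector with `B w = w - 1 ≤ θ w` for some `θ < 1`: `B` contracts
the weighted max-norm with weights `w`. Since `x*` is a fixed point of every update, the errors
`eᵏᵢ = |xᵏᵢ - x*ᵢ|` satisfy `eᵏ⁺¹ᵢ ≤ (B ẽ)ᵢ` when block `π i` is updated, `ẽ` being the vector of
delayed errors that the update reads, and do not change otherwise. A bound `e ≤ a w` that holds
from some time on therefore improves to `e ≤ θ a w` as soon as all delays have passed that time and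
every block has been updated once more; iterating this gives `e → 0`.
-/

open Matrix Filter

/-- Spectral radius of a real square matrix: the supremum of the moduli of its
complex eigenvalues. -/
noncomputable def specRad {m : Type*} [Fintype m] [DecidableEq m]
    (A : Matrix m m ℝ) : ℝ :=
  sSup ((fun z => ‖z‖) '' spectrum ℂ (A.map Complex.ofReal))

/-- Entrywise absolute value (modulus) of a complex matrix. -/
noncomputable def cabs {m l : Type*} (A : Matrix m l ℂ) : Matrix m l ℝ :=
  fun i j => ‖A i j‖

open Topology

attribute [local instance] Matrix.linftyOpNormedAddCommGroup Matrix.linftyOpNormedRing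
  Matrix.linftyOpNormedAlgebra

theorem summable_norm_pow_of_spectralRadius_lt_one {A : Type*} [NormedRing A]
    [NormedAlgebra ℂ A] [CompleteSpace A] {a : A} (ha : spectralRadius ℂ a < 1) :
    Summable fun k => ‖a ^ k‖ := by
  obtain ⟨r, hρr, hr1⟩ := ENNReal.lt_iff_exists_nnreal_btwn.1 ha
  have hgelfand := spectrum.pow_norm_pow_one_div_tendsto_nhds_spectralRadius a
  have hev : ∀ᶠ k : ℕ in atTop, ‖‖a ^ k‖‖ ≤ (r : ℝ) ^ k := by
    filter_upwards [hgelfand.eventually_lt_const hρr, eventually_ne_atTop 0] with k hk hk0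
    rw [ENNReal.ofReal_lt_coe_iff (by positivity), one_div] at hk
    calc ‖‖a ^ k‖‖ = (‖a ^ k‖ ^ (k⁻¹ : ℝ)) ^ k := by
          rw [norm_norm, Real.rpow_inv_natCast_pow (norm_nonneg _) hk0]
      _ ≤ r ^ k := pow_le_pow_left₀ (by positivity) hk.le k
  exact .of_norm_bounded_eventually_nat (summable_geometric_of_lt_one r.2 (mod_cast hr1)) hev

theorem linfty_opNorm_map_ofReal {ι κ : Type*} [Fintype ι] [Fintype κ] (B : Matrix ι κ ℝ) :
    ‖B.map Complex.ofReal‖ = ‖B‖ := by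
  simp [linfty_opNorm_def]

theorem spectralRadius_lt_one_of_specRad_lt_one {ι : Type*} [Fintype ι] [DecidableEq ι]
    {B : Matrix ι ι ℝ} (hB : specRad B < 1) : spectralRadius ℂ (B.map Complex.ofReal) < 1 := by
  refine lt_of_le_of_lt (iSup₂_le fun z hz => ?_) (ENNReal.ofReal_lt_one.2 hB)
  rw [← ENNReal.ofReal_coe_nnreal, coe_nnnorm]
  exact ENNReal.ofReal_le_ofReal <|
    le_csSup ((spectrum.isCompact _).image continuous_norm).bddAbove ⟨z, hz, rfl⟩

theorem summable_pow_of_specRad_lt_one {ι : Type*} [Fintype ι] [DecidableEq ι]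
    {B : Matrix ι ι ℝ} (hρ : specRad B < 1) : Summable fun k => B ^ k := by
  have : CompleteSpace (Matrix ι ι ℂ) := FiniteDimensional.complete ℂ _
  refine Summable.of_norm <| (summable_norm_pow_of_spectralRadius_lt_one (a := B.map Complex.ofReal)
    (spectralRadius_lt_one_of_specRad_lt_one hρ)).congr fun k => ?_
  rw [← linfty_opNorm_map_ofReal (B ^ k)]
  exact congrArg norm (map_pow Complex.ofRealHom.mapMatrix B k).symm

theorem exists_pos_mulVec_le_smul_of_specRad_lt_one {ι : Type*} [Fintype ι] [DecidableEq ι]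
    {B : Matrix ι ι ℝ} (hB : ∀ i j, 0 ≤ B i j) (hρ : specRad B < 1) :
    ∃ (w : ι → ℝ) (θ : ℝ), (∀ i, 0 < w i) ∧ 0 ≤ θ ∧ θ < 1 ∧ B *ᵥ w ≤ θ • w := by
  have hsum := summable_pow_of_specRad_lt_one hρ
  have hS : ∑' k, B ^ k = 1 + B * ∑' k, B ^ k := by
    nth_rw 1 [hsum.tsum_eq_zero_add]
    rw [← hsum.tsum_mul_left]
    simp [pow_succ']
  have hS0 : ∀ i j, 0 ≤ (∑' k, B ^ k) i j := fun i j =>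
    (Pi.hasSum.1 (Pi.hasSum.1 hsum.hasSum i) j).nonneg fun k => pow_apply_nonneg hB k i j
  generalize ∑' k, B ^ k = S at hS hS0
  set w := S *ᵥ 1
  have hw : ∀ i, w i = 1 + (B *ᵥ w) i := fun i => by
    simp only [w, mulVec_mulVec]
    conv_lhs => rw [hS]
    rw [add_mulVec, one_mulVec]
    rfl
  have hw0 : ∀ i, 0 ≤ w i := fun i => Finset.sum_nonneg fun j _ => by simpa using hS0 i j
  have hBw0 : ∀ i, 0 ≤ (B *ᵥ w) i := fun i =>
    Finset.sum_nonneg fun j _ => mul_nonneg (hB i j) (hw0 j)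
  -- `B w = w - 1` and `w ≤ W`, so `B w ≤ (1 - 1 / (W + 1)) w`.
  set W := ∑ i, w i
  have hW : 0 ≤ W := Finset.sum_nonneg fun i _ => hw0 i
  refine ⟨w, W / (W + 1), fun i => by linarith [hw i, hBw0 i], by positivity,
    (div_lt_one (by positivity)).2 (by linarith), fun i => ?_⟩
  have hwW : w i ≤ W := Finset.single_le_sum (fun j _ => hw0 j) (Finset.mem_univ i)
  rw [Pi.smul_apply, smul_eq_mul, div_mul_eq_mul_div, le_div_iff₀ (by positivity)]
  nlinarith [hw i]

theorem mulVec_le_smul_of_le_smul {ι : Type*} [Fintype ι] {B : Matrix ι ι ℝ} {v w : ι → ℝ}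
    {θ a : ℝ} (hB : ∀ i j, 0 ≤ B i j) (hBw : B *ᵥ w ≤ θ • w) (ha : 0 ≤ a) (hv : v ≤ a • w) :
    B *ᵥ v ≤ (θ * a) • w := fun i =>
  calc (B *ᵥ v) i ≤ (B *ᵥ (a • w)) i :=
        Finset.sum_le_sum fun j _ => mul_le_mul_of_nonneg_left (hv j) (hB i j)
    _ = a * (B *ᵥ w) i := by rw [mulVec_smul, Pi.smul_apply, smul_eq_mul]
    _ ≤ a * (θ * w i) := mul_le_mul_of_nonneg_left (hBw i) ha
    _ = ((θ * a) • w) i := by rw [Pi.smul_apply, smul_eq_mul]; ring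

theorem eventually_le_of_frequently_reset {u : ℕ → ℝ} {P : ℕ → Prop} {b : ℝ} {K : ℕ}
    (hP : ∃ k ≥ K, P k) (hreset : ∀ k ≥ K, P k → u (k + 1) ≤ b)
    (hkeep : ∀ k, ¬ P k → u (k + 1) ≤ u k) : ∀ᶠ k in atTop, u k ≤ b := by
  obtain ⟨k₀, hk₀K, hk₀⟩ := hP
  refine eventually_atTop.2 ⟨k₀ + 1, fun k hk => ?_⟩
  induction k, hk using Nat.le_induction with
  | base => exact hreset k₀ hk₀K hk₀
  | succ k hk ih =>
    by_cases hPk : P k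
    · exact hreset k (by omega) hPk
    · exact (hkeep k hPk).trans ih

section Asynchronous

variable {ι : Type*} [Fintype ι] {B : Matrix ι ι ℝ} {w : ι → ℝ} {θ : ℝ} {e : ℕ → ι → ℝ}
  {upd : ℕ → ι → Prop} {d : ℕ → ι → ι → ℕ}

theorem le_smul_of_initial_le_smul (hB : ∀ i j, 0 ≤ B i j) (hBw : B *ᵥ w ≤ θ • w) (hθ : θ ≤ 1)
    (hw : 0 ≤ w) (hupd : ∀ k i, upd k i → e (k + 1) i ≤ (B *ᵥ fun l => e (d k i l) l) i)
    (hkeep : ∀ k i, ¬ upd k i → e (k + 1) i ≤ e k i) (hd : ∀ k i l, d k i l ≤ k) {a : ℝ}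
    (ha : 0 ≤ a) (h0 : e 0 ≤ a • w) (k : ℕ) : e k ≤ a • w := by
  induction k using Nat.strong_induction_on with
  | _ k ih =>
    match k with
    | 0 => exact h0
    | k + 1 =>
      intro i
      by_cases hk : upd k i
      · have hθa : (θ * a) • w ≤ a • w := fun j => by
          simp only [Pi.smul_apply, smul_eq_mul]
          exact mul_le_mul_of_nonneg_right (mul_le_of_le_one_left ha hθ) (hw j)
        exact (hupd k i hk).trans <| (mulVec_le_smul_of_le_smul hB hBw ha
          (fun l => ih _ (Nat.lt_succ_of_le (hd k i l)) l)).trans hθa i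
      · exact (hkeep k i hk).trans (ih k (Nat.lt_succ_self k) i)

theorem eventually_le_mul_smul_of_eventually_le_smul (hB : ∀ i j, 0 ≤ B i j)
    (hBw : B *ᵥ w ≤ θ • w)
    (hupd : ∀ k i, upd k i → e (k + 1) i ≤ (B *ᵥ fun l => e (d k i l) l) i)
    (hkeep : ∀ k i, ¬ upd k i → e (k + 1) i ≤ e k i)
    (hdelay : ∀ i l, Tendsto (fun k => d k i l) atTop atTop) (hfreq : ∀ i K, ∃ k ≥ K, upd k i)
    {a : ℝ} (ha : 0 ≤ a) (h : ∀ᶠ k in atTop, e k ≤ a • w) :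
    ∀ᶠ k in atTop, e k ≤ (θ * a) • w := by
  obtain ⟨K, hK⟩ := eventually_atTop.1 h
  obtain ⟨K', hK'⟩ := eventually_atTop.1 <| eventually_all.2 fun i => eventually_all.2 fun l =>
    (hdelay i l).eventually_ge_atTop K
  have hcoord : ∀ i, ∀ᶠ k in atTop, e k i ≤ ((θ * a) • w) i := fun i =>
    eventually_le_of_frequently_reset (hfreq i K')
      (fun k hk hki => (hupd k i hki).trans <|
        mulVec_le_smul_of_le_smul hB hBw ha (fun l => hK _ (hK' k hk i l) l) i)
      (hkeep · i)
  filter_upwards [eventually_all.2 hcoord] with k hk using hk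

theorem tendsto_zero_of_asynchronous_contraction (hB : ∀ i j, 0 ≤ B i j) (hBw : B *ᵥ w ≤ θ • w)
    (hw : ∀ i, 0 < w i) (hθ0 : 0 ≤ θ) (hθ1 : θ < 1) (he : ∀ k i, 0 ≤ e k i)
    (hupd : ∀ k i, upd k i → e (k + 1) i ≤ (B *ᵥ fun l => e (d k i l) l) i)
    (hkeep : ∀ k i, ¬ upd k i → e (k + 1) i ≤ e k i) (hd : ∀ k i l, d k i l ≤ k)
    (hdelay : ∀ i l, Tendsto (fun k => d k i l) atTop atTop) (hfreq : ∀ i K, ∃ k ≥ K, upd k i) :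
    Tendsto e atTop (𝓝 0) := by
  set c := ∑ i, e 0 i / w i
  have hc : 0 ≤ c := Finset.sum_nonneg fun i _ => div_nonneg (he 0 i) (hw i).le
  have h0 : e 0 ≤ c • w := fun i => by
    rw [Pi.smul_apply, smul_eq_mul, ← div_le_iff₀ (hw i)]
    exact Finset.single_le_sum (fun j _ => div_nonneg (he 0 j) (hw j).le) (Finset.mem_univ i)
  have hbound : ∀ p : ℕ, ∀ᶠ k in atTop, e k ≤ (θ ^ p * c) • w := by
    intro p
    induction p with
    | zero =>
      have := le_smul_of_initial_le_smul hB hBw hθ1.le (fun i => (hw i).le) hupd hkeep hd hc h0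
      simpa only [pow_zero, one_mul] using Eventually.of_forall (f := atTop) this
    | succ p ih =>
      simpa only [pow_succ', mul_assoc] using
        eventually_le_mul_smul_of_eventually_le_smul hB hBw hupd hkeep hdelay hfreq
          (by positivity) ih
  refine tendsto_pi_nhds.2 fun i => tendsto_order.2
    ⟨fun b hb => Eventually.of_forall fun k => hb.trans_le (he k i), fun b hb => ?_⟩
  have hlim : Tendsto (fun p : ℕ => θ ^ p * c * w i) atTop (𝓝 0) := by
    simpa using ((tendsto_pow_atTop_nhds_zero_of_lt_one hθ0 hθ1).mul_const c).mul_const (w i)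
  obtain ⟨p, hp⟩ := (hlim.eventually (gt_mem_nhds hb)).exists
  filter_upwards [hbound p] with k hk using (hk i).trans_lt hp

end Asynchronous

theorem add_mulVec_sub_sub_eq_one_sub_mul_mulVec {ι R : Type*} [Fintype ι] [DecidableEq ι]
    [CommRing R]
    (N A : Matrix ι ι R) (xstar y : ι → R) :
    y + N *ᵥ (A *ᵥ xstar - A *ᵥ y) - xstar = (1 - N * A) *ᵥ (y - xstar) := by
  rw [sub_mulVec, one_mulVec, ← mulVec_mulVec, ← mulVec_sub, ← neg_sub y xstar, mulVec_neg,
    mulVec_neg]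
  abel

theorem norm_mulVec_apply_le_cabs_mulVec {ι : Type*} [Fintype ι] (T : Matrix ι ι ℂ)
    (v : ι → ℂ) (i : ι) : ‖(T *ᵥ v) i‖ ≤ (cabs T *ᵥ fun l => ‖v l‖) i :=
  (norm_sum_le _ _).trans_eq <| Finset.sum_congr rfl fun _ _ => norm_mul _ _

theorem stmt9_general {n m : ℕ}
    (A M : Matrix (Fin n) (Fin n) ℂ) (b xstar : Fin n → ℂ)
    (hsol : A.mulVec xstar = b)
    (π : Fin n → Fin m)
    (hρ : specRad (cabs (1 - M⁻¹ * A)) < 1)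
    (Ω : ℕ → Set (Fin m))
    (hΩ : ∀ s : Fin m, ∀ K : ℕ, ∃ k ≥ K, s ∈ Ω k)
    (δ : Fin m → Fin m → ℕ → ℕ)
    (hδle : ∀ s q k, δ s q k ≤ k)
    (hδlim : ∀ s q, Tendsto (fun k => δ s q k) atTop atTop)
    (x : ℕ → Fin n → ℂ)
    (hupd : ∀ k i, π i ∈ Ω k → x (k + 1) i =
      x (δ (π i) (π i) k) i +
        ∑ j, M⁻¹ i j * (b j - ∑ l, A j l * x (δ (π i) (π l) k) l))
    (hkeep : ∀ k i, π i ∉ Ω k → x (k + 1) i = x k i) :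
    Tendsto x atTop (nhds xstar) := by
  obtain ⟨w, θ, hw, hθ0, hθ1, hBw⟩ :=
    exists_pos_mulVec_le_smul_of_specRad_lt_one (B := cabs (1 - M⁻¹ * A))
      (fun i j => norm_nonneg _) hρ
  have herr : ∀ k i, π i ∈ Ω k → ‖x (k + 1) i - xstar i‖ ≤
      (cabs (1 - M⁻¹ * A) *ᵥ fun l => ‖x (δ (π i) (π l) k) l - xstar l‖) i := fun k i hk =>
    calc ‖x (k + 1) i - xstar i‖
        = ‖((1 - M⁻¹ * A) *ᵥ ((fun l => x (δ (π i) (π l) k) l) - xstar)) i‖ := by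
          rw [← add_mulVec_sub_sub_eq_one_sub_mul_mulVec, hupd k i hk, ← hsol]; rfl
      _ ≤ _ := norm_mulVec_apply_le_cabs_mulVec _ _ i
  have hlim := tendsto_zero_of_asynchronous_contraction (e := fun k i => ‖x k i - xstar i‖)
    (upd := fun k i => π i ∈ Ω k) (d := fun k i l => δ (π i) (π l) k)
    (fun i j => norm_nonneg _) hBw hw hθ0 hθ1 (fun k i => norm_nonneg _) herr
    (fun k i hk => by rw [hkeep k i hk]) (fun k _ _ => hδle _ _ k)
    (fun i l => hδlim _ _) (fun i => hΩ (π i))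
  exact tendsto_pi_nhds.2 fun i => tendsto_iff_norm_sub_tendsto_zero.2 (tendsto_pi_nhds.1 hlim i)

theorem stmt9 {n m : ℕ}
    (A M : Matrix (Fin n) (Fin n) ℂ) (b xstar : Fin n → ℂ)
    (hsol : A.mulVec xstar = b)
    (π : Fin n → Fin m)
    (hMunit : IsUnit M)
    (hMblock : ∀ i j, π i ≠ π j → M i j = 0)
    (hρ : specRad (cabs (1 - M⁻¹ * A)) < 1)
    (Ω : ℕ → Set (Fin m))
    (hΩ : ∀ s : Fin m, ∀ K : ℕ, ∃ k ≥ K, s ∈ Ω k)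
    (δ : Fin m → Fin m → ℕ → ℕ)
    (hδle : ∀ s q k, δ s q k ≤ k)
    (hδlim : ∀ s q, Tendsto (fun k => δ s q k) atTop atTop)
    (x : ℕ → Fin n → ℂ)
    (hupd : ∀ k i, π i ∈ Ω k → x (k + 1) i =
      x (δ (π i) (π i) k) i +
        ∑ j, M⁻¹ i j * (b j - ∑ l, A j l * x (δ (π i) (π l) k) l))
    (hkeep : ∀ k i, π i ∉ Ω k → x (k + 1) i = x k i) :
    Tendsto x atTop (nhds xstar) :=
  stmt9_general A M b xstar hsol π hρ Ω hΩ δ hδle hδlim x hupd hkeep
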